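/- Let u₀(ξ) = tanh(ξ/√2) and f(u) = u³ − u (so f'(u) = 3u² − 1). Let u₁ : ℝ → ℝ be twice continuously differentiable such that u₁ and u₁'' are bounded on ℝ and lim_{ξ→±∞} u₁'(ξ) = 0. Then the function ξ ↦ u₀'(ξ)·[u₁''(ξ) − f'(u₀(ξ))·u₁(ξ)] is integrable on ℝ and ∫_{−∞}^{∞} u₀'(ξ)·[u₁''(ξ) − f'(u₀(ξ))·u₁(ξ)] dξ = 0. -/

import Mathlib

/-!
Differentiating `u₀'' = f(u₀)` shows that `φ = u₀'` solves `φ'' = f'(u₀) φ`, i.e. it lies in the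
kernel of the linearised operator `L = ∂² - f'(u₀)`. Hence `u₀' · L u₁ = (u₀' u₁' - u₀'' u₁)'` is
the derivative of a Wronskian, which vanishes at `±∞` since `u₀'` and `u₁` are bounded while
`u₁' → 0` and `u₀'' = u₀³ - u₀ → 0`. Integrability is free: `u₀' ≥ 0` is the derivative of a
bounded monotone function, and `L u₁` is bounded.
-/

open MeasureTheory Filter

/-- The transition profile `u₀(ξ) = tanh(ξ/√2)`. -/
noncomputable def transitionProfile (ξ : ℝ) : ℝ := Real.tanh (ξ / Real.sqrt 2)

open Topology Set

namespace Real

theorem hasDerivAt_tanh (x : ℝ) : HasDerivAt tanh (1 - tanh x ^ 2) x := by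
  have h := (hasDerivAt_sinh x).div (hasDerivAt_cosh x) (cosh_pos x).ne'
  rw [show sinh / cosh = tanh from funext fun y => (tanh_eq_sinh_div_cosh y).symm] at h
  refine h.congr_deriv ?_
  rw [tanh_eq_sinh_div_cosh]
  field_simp [(cosh_pos x).ne']

theorem tanh_eq_one_sub_exp_div_one_add_exp (x : ℝ) :
    tanh x = (1 - exp (-2 * x)) / (1 + exp (-2 * x)) := by
  have h : exp (-2 * x) = exp (-x) / exp x := by
    rw [div_eq_mul_inv, ← exp_neg, ← exp_add]; ring_nf
  rw [tanh_eq, h]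
  field_simp

theorem tendsto_tanh_atTop : Tendsto tanh atTop (𝓝 1) := by
  have hexp : Tendsto (fun x => exp (-2 * x)) atTop (𝓝 0) :=
    tendsto_exp_atBot.comp (tendsto_id.const_mul_atTop_of_neg (by norm_num))
  have hone : Tendsto (fun _ : ℝ => (1 : ℝ)) atTop (𝓝 1) := tendsto_const_nhds
  rw [funext tanh_eq_one_sub_exp_div_one_add_exp]
  convert (hone.sub hexp).div (hone.add hexp) (by norm_num) using 2 <;> norm_num

theorem tendsto_tanh_atBot : Tendsto tanh atBot (𝓝 (-1)) := by
  simpa [Function.comp_def, tanh_neg] using (tendsto_tanh_atTop.comp tendsto_neg_atBot_atTop).neg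

end Real

theorem integrable_deriv_of_nonneg {g g' : ℝ → ℝ} {a b : ℝ}
    (hderiv : ∀ x, HasDerivAt g (g' x) x) (hg' : ∀ x, 0 ≤ g' x)
    (hbot : Tendsto g atBot (𝓝 a)) (htop : Tendsto g atTop (𝓝 b)) : Integrable g' := by
  rw [← integrableOn_univ, ← Iio_union_Ici (a := (0 : ℝ)), integrableOn_union,
    integrableOn_Ici_iff_integrableOn_Ioi]
  refine ⟨?_, integrableOn_Ioi_deriv_of_nonneg' (fun x _ => hderiv x) (fun x _ => hg' x) htop⟩
  have hreflected : IntegrableOn (fun x => g' (-x)) (Ioi 0) :=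
    integrableOn_Ioi_deriv_of_nonneg' (g := fun x => -g (-x))
      (fun x _ => ((hderiv (-x)).comp x (hasDerivAt_neg x)).neg.congr_deriv (by ring))
      (fun x _ => hg' (-x)) (hbot.comp tendsto_neg_atTop_atBot).neg
  rw [← (Measure.measurePreserving_neg (volume : Measure ℝ)).integrableOn_comp_preimage
      (Homeomorph.neg ℝ).measurableEmbedding]
  simpa [Function.comp_def] using hreflected

theorem integral_mul_schrodinger_eq_zero_of_wronskian_tendsto {φ φ' u u' u'' q : ℝ → ℝ}
    (hφ : ∀ x, HasDerivAt φ (φ' x) x) (hφ' : ∀ x, HasDerivAt φ' (q x * φ x) x)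
    (hu : ∀ x, HasDerivAt u (u' x) x) (hu' : ∀ x, HasDerivAt u' (u'' x) x)
    (hint : Integrable fun x => φ x * (u'' x - q x * u x))
    (hbot : Tendsto (fun x => φ x * u' x - φ' x * u x) atBot (𝓝 0))
    (htop : Tendsto (fun x => φ x * u' x - φ' x * u x) atTop (𝓝 0)) :
    ∫ x, φ x * (u'' x - q x * u x) = 0 := by
  have hwronskian : ∀ x, HasDerivAt (fun x => φ x * u' x - φ' x * u x)
      (φ x * (u'' x - q x * u x)) x := fun x =>
    (((hφ x).mul (hu' x)).sub ((hφ' x).mul (hu x))).congr_deriv (by ring)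
  simpa using integral_of_hasDerivAt_of_tendsto hwronskian hint hbot htop

theorem hasDerivAt_transitionProfile (ξ : ℝ) :
    HasDerivAt transitionProfile ((1 - transitionProfile ξ ^ 2) / √2) ξ :=
  ((Real.hasDerivAt_tanh (ξ / √2)).comp ξ ((hasDerivAt_id ξ).div_const √2)).congr_deriv
    (by simp [transitionProfile, div_eq_mul_inv])

theorem deriv_transitionProfile :
    deriv transitionProfile = fun ξ => (1 - transitionProfile ξ ^ 2) / √2 :=
  funext fun ξ => (hasDerivAt_transitionProfile ξ).deriv

theorem hasDerivAt_deriv_transitionProfile (ξ : ℝ) :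
    HasDerivAt (deriv transitionProfile) (transitionProfile ξ ^ 3 - transitionProfile ξ) ξ := by
  have h := hasDerivAt_transitionProfile ξ
  rw [deriv_transitionProfile]
  refine ((h.pow 2).const_sub 1).div_const √2 |>.congr_deriv ?_
  field_simp
  rw [Real.sq_sqrt zero_le_two]
  ring

theorem hasDerivAt_transitionProfile_cube_sub (ξ : ℝ) :
    HasDerivAt (fun ξ => transitionProfile ξ ^ 3 - transitionProfile ξ)
      ((3 * transitionProfile ξ ^ 2 - 1) * deriv transitionProfile ξ) ξ := by
  have h := hasDerivAt_transitionProfile ξ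
  rw [h.deriv]
  exact ((h.pow 3).sub h).congr_deriv (by ring)

theorem continuous_transitionProfile : Continuous transitionProfile :=
  continuous_iff_continuousAt.2 fun ξ => (hasDerivAt_transitionProfile ξ).continuousAt

theorem abs_transitionProfile_le_one (ξ : ℝ) : |transitionProfile ξ| ≤ 1 :=
  (Real.abs_tanh_lt_one _).le

theorem abs_three_mul_transitionProfile_sq_sub_one_le (ξ : ℝ) :
    |3 * transitionProfile ξ ^ 2 - 1| ≤ 2 := by
  have := abs_transitionProfile_le_one ξ
  rw [abs_le] at this ⊢
  constructor <;> nlinarith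

theorem deriv_transitionProfile_nonneg (ξ : ℝ) : 0 ≤ deriv transitionProfile ξ := by
  rw [deriv_transitionProfile]
  have := Real.tanh_sq_lt_one (ξ / √2)
  exact div_nonneg (by rw [transitionProfile]; linarith) (Real.sqrt_nonneg 2)

theorem abs_deriv_transitionProfile_le_one (ξ : ℝ) : |deriv transitionProfile ξ| ≤ 1 := by
  rw [abs_of_nonneg (deriv_transitionProfile_nonneg ξ), deriv_transitionProfile,
    div_le_one (by positivity)]
  nlinarith [Real.one_lt_sqrt_two, sq_nonneg (transitionProfile ξ)]

theorem tendsto_transitionProfile_atTop : Tendsto transitionProfile atTop (𝓝 1) :=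
  Real.tendsto_tanh_atTop.comp (tendsto_id.atTop_div_const (by positivity))

theorem tendsto_transitionProfile_atBot : Tendsto transitionProfile atBot (𝓝 (-1)) :=
  Real.tendsto_tanh_atBot.comp (tendsto_id.atBot_div_const (by positivity))

theorem tendsto_transitionProfile_cube_sub_atTop :
    Tendsto (fun ξ => transitionProfile ξ ^ 3 - transitionProfile ξ) atTop (𝓝 0) := by
  convert (tendsto_transitionProfile_atTop.pow 3).sub tendsto_transitionProfile_atTop using 2
  norm_num

theorem tendsto_transitionProfile_cube_sub_atBot :
    Tendsto (fun ξ => transitionProfile ξ ^ 3 - transitionProfile ξ) atBot (𝓝 0) := by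
  convert (tendsto_transitionProfile_atBot.pow 3).sub tendsto_transitionProfile_atBot using 2
  norm_num

theorem integrable_deriv_transitionProfile : Integrable (deriv transitionProfile) :=
  integrable_deriv_of_nonneg (fun ξ => (hasDerivAt_transitionProfile ξ).differentiableAt.hasDerivAt)
    deriv_transitionProfile_nonneg tendsto_transitionProfile_atBot tendsto_transitionProfile_atTop

theorem tendsto_wronskian_deriv_transitionProfile {u v : ℝ → ℝ} {C : ℝ} {l : Filter ℝ}
    (hu : ∀ ξ, |u ξ| ≤ C) (hv : Tendsto v l (𝓝 0))
    (hcube : Tendsto (fun ξ => transitionProfile ξ ^ 3 - transitionProfile ξ) l (𝓝 0)) :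
    Tendsto (fun ξ => deriv transitionProfile ξ * v ξ -
      (transitionProfile ξ ^ 3 - transitionProfile ξ) * u ξ) l (𝓝 0) := by
  simpa using
    (bdd_le_mul_tendsto_zero' 1 (Eventually.of_forall abs_deriv_transitionProfile_le_one) hv).sub
      (hcube.zero_mul_isBoundedUnder_le (isBoundedUnder_of ⟨C, hu⟩))

/-- Orthogonality identity used in the inner expansion of the sharp-interface
limit: for `u₀(ξ) = tanh(ξ/√2)`, `f(u) = u³ − u` (so `f'(u) = 3u² − 1`), and any
`C²` function `u₁` with `u₁` and `u₁''` bounded and `u₁'(ξ) → 0` as `ξ → ±∞`,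
the function `ξ ↦ u₀'(ξ)[u₁''(ξ) − f'(u₀(ξ))u₁(ξ)]` is integrable on `ℝ` with
integral zero. -/
theorem inner_expansion_orthogonality (u₁ : ℝ → ℝ)
    (hu₁ : ContDiff ℝ 2 u₁)
    (hbdd : ∃ C : ℝ, ∀ ξ : ℝ, |u₁ ξ| ≤ C)
    (hbdd'' : ∃ C : ℝ, ∀ ξ : ℝ, |deriv (deriv u₁) ξ| ≤ C)
    (htop : Tendsto (deriv u₁) atTop (nhds 0))
    (hbot : Tendsto (deriv u₁) atBot (nhds 0)) :
    Integrable (fun ξ : ℝ =>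
      deriv transitionProfile ξ *
        (deriv (deriv u₁) ξ - (3 * transitionProfile ξ ^ 2 - 1) * u₁ ξ)) volume ∧
    (∫ ξ : ℝ, deriv transitionProfile ξ *
        (deriv (deriv u₁) ξ - (3 * transitionProfile ξ ^ 2 - 1) * u₁ ξ)) = 0 := by
  obtain ⟨C₁, hC₁⟩ := hbdd
  obtain ⟨C₂, hC₂⟩ := hbdd''
  have hu₁' : ContDiff ℝ 1 (deriv u₁) := hu₁.deriv'
  have hLu₁_bdd (ξ : ℝ) :
      ‖deriv (deriv u₁) ξ - (3 * transitionProfile ξ ^ 2 - 1) * u₁ ξ‖ ≤ C₂ + 2 * C₁ :=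
    calc _ ≤ |deriv (deriv u₁) ξ| + |3 * transitionProfile ξ ^ 2 - 1| * |u₁ ξ| := by
          rw [Real.norm_eq_abs, ← abs_mul]; exact abs_sub _ _
      _ ≤ C₂ + 2 * C₁ := add_le_add (hC₂ ξ) (mul_le_mul
          (abs_three_mul_transitionProfile_sq_sub_one_le ξ) (hC₁ ξ) (abs_nonneg _) zero_le_two)
  have hint := integrable_deriv_transitionProfile.mul_bdd
    ((hu₁'.continuous_deriv le_rfl).sub ((continuous_const.mul
      (continuous_transitionProfile.pow 2) |>.sub continuous_const).mul
      hu₁.continuous)).aestronglyMeasurable (ae_of_all _ hLu₁_bdd)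
  refine ⟨hint, integral_mul_schrodinger_eq_zero_of_wronskian_tendsto
    hasDerivAt_deriv_transitionProfile hasDerivAt_transitionProfile_cube_sub
    (fun ξ => (hu₁.differentiable two_ne_zero ξ).hasDerivAt)
    (fun ξ => (hu₁'.differentiable one_ne_zero ξ).hasDerivAt) hint
    (tendsto_wronskian_deriv_transitionProfile hC₁ hbot tendsto_transitionProfile_cube_sub_atBot)
    (tendsto_wronskian_deriv_transitionProfile hC₁ htop tendsto_transitionProfile_cube_sub_atTop)⟩
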